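/- (Case 1 of Lemma 3) Let y ∈ C³[0,1] satisfy |y^{(k)}(x)| ≤ C₀ ε^{−k} e^{−βx/ε} for k = 0,1,2,3 and x ∈ [0,1], where β > 0 and C₀ > 0. Then there exist ε₀ > 0 and C > 0, depending only on a, q, β, C₀ and max|b|, max|c|, such that on the VB-mesh, for all 0 < ε ≤ ε₀, all N ≥ 2, and all indices i with J+1 ≤ i ≤ N−1, the consistency error satisfies |τ_i[y]| ≤ C N^{−1}. -/

import Mathlib

/-- `ψ(t) = aεt/(q−t)`, the Bakhvalov mesh-generating function on the fine part. -/
noncomputable def psi (a ε q t : ℝ) : ℝ := a * ε * t / (q - t)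

/-- `ψ′(t) = aεq/(q−t)²`. -/
noncomputable def psi' (a ε q t : ℝ) : ℝ := a * ε * q / (q - t) ^ 2

/-- The transition parameter `α = (q − √(aεq(1−q+aε)))/(1+aε)` of the VB-mesh. -/
noncomputable def alph (a ε q : ℝ) : ℝ :=
  (q - Real.sqrt (a * ε * q * (1 - q + a * ε))) / (1 + a * ε)

/-- The mesh-generating function `λ`: `ψ` on `[0,α]`, its tangent line on `[α,1]`. -/
noncomputable def lam (a ε q t : ℝ) : ℝ :=
  if t ≤ alph a ε q then psi a ε q t
  else psi a ε q (alph a ε q) + psi' a ε q (alph a ε q) * (t - alph a ε q)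

/-- VB-mesh points `x_i = λ(i/N)`. -/
noncomputable def meshx (a ε q : ℝ) (N i : ℕ) : ℝ := lam a ε q ((i : ℝ) / (N : ℝ))

/-- Mesh steps `h_i = x_i − x_{i−1}`. -/
noncomputable def meshh (a ε q : ℝ) (N i : ℕ) : ℝ :=
  meshx a ε q N i - meshx a ε q N (i - 1)

/-- Averaged mesh steps `h̄_i = (h_i + h_{i+1})/2`. -/
noncomputable def meshhb (a ε q : ℝ) (N i : ℕ) : ℝ :=
  (meshh a ε q N i + meshh a ε q N (i + 1)) / 2

/-- The coarse (uniform) step `H = ψ′(α)/N` of the VB-mesh. -/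
noncomputable def bigH (a ε q : ℝ) (N : ℕ) : ℝ := psi' a ε q (alph a ε q) / N
/-- The consistency error `τ_i[u]` of the upwind scheme at an interior mesh point. -/
noncomputable def tau (b c : ℝ → ℝ) (ε : ℝ) (x : ℕ → ℝ) (u : ℝ → ℝ) (i : ℕ) : ℝ :=
  let h : ℕ → ℝ := fun k => x k - x (k - 1)
  let hb : ℝ := (h i + h (i + 1)) / 2
  let D1 : ℝ := (u (x (i + 1)) - u (x i)) / h (i + 1)
  let D2 : ℝ := ((u (x (i + 1)) - u (x i)) / h (i + 1) - (u (x i) - u (x (i - 1))) / h i) / hb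
  (-ε * D2 - b (x i) * D1 + c (x i) * u (x i)) -
    (-ε * iteratedDeriv 2 u (x i) - b (x i) * deriv u (x i) + c (x i) * u (x i))

/-!
On the coarse part of the VB-mesh the points `x_{i-1}, x_i, x_{i+1}` are equally spaced with step
`H = ψ′(α)/N`, and `H ≤ 1/((1-q)N)` because the tangent line of `ψ` at `α` runs from `(α, ψ(α))`
to `(1, 1)`. Taylor expansion bounds the consistency error there by
`ε H max|y‴|/3 + |b| H max|y″|/2 ≲ H ε⁻² e^{-βψ(α)/ε}`. For small `ε` one has `α ≥ q/2` and
`(q - α)² ≤ 4aεq`, so `ψ(α)² ≥ aqε/16`; then `βψ(α)/ε ≳ ε^{-1/2}` and `e^{-z} ≤ 24 z⁻⁴`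
absorbs the factor `ε⁻²`.
-/

open Set

open Finset Nat in
theorem exists_taylor_lagrange_of_contDiff {f : ℝ → ℝ} {n : ℕ} (hf : ContDiff ℝ (n + 1) f)
    {x₀ x : ℝ} (hx : x₀ ≠ x) :
    ∃ ξ ∈ uIoo x₀ x, f x = ∑ k ∈ range (n + 1), iteratedDeriv k f x₀ * (x - x₀) ^ k / k ! +
      iteratedDeriv (n + 1) f ξ * (x - x₀) ^ (n + 1) / (n + 1)! := by
  obtain ⟨ξ, hξ, h⟩ := taylor_mean_remainder_lagrange_iteratedDeriv hx hf.contDiffOn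
  refine ⟨ξ, hξ, ?_⟩
  have hpoly : taylorWithinEval f n (uIcc x₀ x) x₀ x =
      ∑ k ∈ range (n + 1), iteratedDeriv k f x₀ * (x - x₀) ^ k / k ! := by
    rw [taylor_within_apply]
    refine Finset.sum_congr rfl fun k hk => ?_
    rw [iteratedDerivWithin_eq_iteratedDeriv (uniqueDiffOn_uIcc hx) _ left_mem_uIcc, smul_eq_mul]
    · ring
    · exact hf.contDiffAt.of_le <| by
        exact_mod_cast (Finset.mem_range_succ_iff.mp hk).trans n.le_succ
  rw [← h, hpoly, add_sub_cancel]

theorem abs_forwardDiff_sub_deriv_le {f : ℝ → ℝ} (hf : ContDiff ℝ 2 f) {x h M : ℝ} (hh : 0 < h)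
    (hM : ∀ t ∈ Icc x (x + h), |iteratedDeriv 2 f t| ≤ M) :
    |(f (x + h) - f x) / h - deriv f x| ≤ M * h / 2 := by
  obtain ⟨ξ, hξ, hTaylor⟩ := exists_taylor_lagrange_of_contDiff (n := 1) hf (x₀ := x)
    (x := x + h) (by linarith)
  rw [uIoo_of_le (by linarith)] at hξ
  have hexp : f (x + h) = f x + deriv f x * h + iteratedDeriv 2 f ξ * h ^ 2 / 2 := by
    simpa [Finset.sum_range_succ] using hTaylor
  have hdiff : (f (x + h) - f x) / h - deriv f x = iteratedDeriv 2 f ξ * h / 2 := by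
    rw [hexp]; field_simp; ring
  rw [hdiff, abs_div, abs_mul, abs_of_pos hh, abs_two]
  gcongr
  exact hM ξ (Ioo_subset_Icc_self hξ)

theorem abs_centralSecondDiff_sub_iteratedDeriv_two_le {f : ℝ → ℝ} (hf : ContDiff ℝ 3 f)
    {x h M : ℝ} (hh : 0 < h) (hM : ∀ t ∈ Icc (x - h) (x + h), |iteratedDeriv 3 f t| ≤ M) :
    |(f (x + h) - 2 * f x + f (x - h)) / h ^ 2 - iteratedDeriv 2 f x| ≤ M * h / 3 := by
  obtain ⟨ξ₁, hξ₁, hTaylor₁⟩ := exists_taylor_lagrange_of_contDiff (n := 2) hf (x₀ := x)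
    (x := x + h) (by linarith)
  obtain ⟨ξ₂, hξ₂, hTaylor₂⟩ := exists_taylor_lagrange_of_contDiff (n := 2) hf (x₀ := x)
    (x := x - h) (by linarith)
  rw [uIoo_of_le (by linarith)] at hξ₁
  rw [uIoo_of_ge (by linarith)] at hξ₂
  have hexp₁ : f (x + h) = f x + deriv f x * h + iteratedDeriv 2 f x * h ^ 2 / 2 +
      iteratedDeriv 3 f ξ₁ * h ^ 3 / 6 := by
    rw [hTaylor₁]
    simp only [Finset.sum_range_succ, Finset.sum_range_zero, iteratedDeriv_zero, iteratedDeriv_one,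
      Nat.factorial]
    push_cast; ring
  have hexp₂ : f (x - h) = f x - deriv f x * h + iteratedDeriv 2 f x * h ^ 2 / 2 -
      iteratedDeriv 3 f ξ₂ * h ^ 3 / 6 := by
    rw [hTaylor₂]
    simp only [Finset.sum_range_succ, Finset.sum_range_zero, iteratedDeriv_zero, iteratedDeriv_one,
      Nat.factorial]
    push_cast; ring
  have hdiff : (f (x + h) - 2 * f x + f (x - h)) / h ^ 2 - iteratedDeriv 2 f x =
      (iteratedDeriv 3 f ξ₁ - iteratedDeriv 3 f ξ₂) * h / 6 := by
    rw [hexp₁, hexp₂]; field_simp; ring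
  have h₁ := hM ξ₁ ⟨by linarith [hξ₁.1], hξ₁.2.le⟩
  have h₂ := hM ξ₂ ⟨hξ₂.1.le, by linarith [hξ₂.2]⟩
  rw [hdiff, abs_div, abs_mul, abs_of_pos hh, abs_of_pos (by norm_num : (0:ℝ) < 6)]
  calc |iteratedDeriv 3 f ξ₁ - iteratedDeriv 3 f ξ₂| * h / 6 ≤ (M + M) * h / 6 := by
        gcongr; exact (abs_sub _ _).trans (add_le_add h₁ h₂)
    _ = M * h / 3 := by ring

section VBMesh

variable {a ε q : ℝ}

theorem sub_alph_eq (haε : 0 < a * ε) :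
    q - alph a ε q = (a * ε * q + √(a * ε * q * (1 - q + a * ε))) / (1 + a * ε) := by
  rw [alph]; field_simp; ring

theorem alph_lt (hq0 : 0 < q) (haε : 0 < a * ε) : alph a ε q < q := by
  have : 0 < q - alph a ε q := by rw [sub_alph_eq haε]; positivity
  linarith

theorem alph_pos (hq1 : q < 1) (haε : 0 < a * ε) (haεq : a * ε < q) : 0 < alph a ε q := by
  have hs : √(a * ε * q * (1 - q + a * ε)) < q := by
    rw [Real.sqrt_lt' (by linarith)]
    nlinarith [mul_pos haε (by linarith : (0:ℝ) < q)]
  exact div_pos (by linarith) (by linarith)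

theorem lam_of_alph_le {t : ℝ} (ht : alph a ε q ≤ t) :
    lam a ε q t = psi a ε q (alph a ε q) + psi' a ε q (alph a ε q) * (t - alph a ε q) := by
  rw [lam]
  split_ifs with h
  · rw [le_antisymm h ht, sub_self, mul_zero, add_zero]
  · rfl

theorem psi_alph_nonneg (hq1 : q < 1) (haε : 0 < a * ε) (haεq : a * ε < q) :
    0 ≤ psi a ε q (alph a ε q) := by
  have hqα := sub_pos.2 (alph_lt (haε.trans haεq) haε)
  have hα := alph_pos hq1 haε haεq
  rw [psi]; positivity

/-- `α` is chosen exactly so that the tangent line of `ψ` at `α` passes through `(1, 1)`. -/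
theorem psi_alph_add_psi'_alph_mul (hq1 : q < 1) (haε : 0 < a * ε) (haεq : a * ε < q) :
    psi a ε q (alph a ε q) + psi' a ε q (alph a ε q) * (1 - alph a ε q) = 1 := by
  have hq0 : 0 < q := haε.trans haεq
  have hs : √(a * ε * q * (1 - q + a * ε)) ^ 2 = a * ε * q * (1 - q + a * ε) :=
    Real.sq_sqrt (mul_nonneg (mul_pos haε hq0).le (by linarith))
  have hqα : q - alph a ε q ≠ 0 := (sub_pos.2 (alph_lt hq0 haε)).ne'
  rw [psi, psi']
  field_simp
  rw [alph]
  field_simp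
  linear_combination (-(1 + a * ε)) * hs

theorem psi'_alph_le (hq1 : q < 1) (haε : 0 < a * ε) (haεq : a * ε < q) :
    psi' a ε q (alph a ε q) ≤ 1 / (1 - q) := by
  have hψ' : 0 ≤ psi' a ε q (alph a ε q) :=
    div_nonneg (mul_pos haε (haε.trans haεq)).le (sq_nonneg _)
  rw [le_div_iff₀ (by linarith)]
  nlinarith [psi_alph_add_psi'_alph_mul hq1 haε haεq, psi_alph_nonneg hq1 haε haεq,
    alph_lt (haε.trans haεq) haε]

variable {N : ℕ}

theorem bigH_pos (hq0 : 0 < q) (haε : 0 < a * ε) (hN : 0 < N) : 0 < bigH a ε q N := by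
  have hqα := sub_pos.2 (alph_lt hq0 haε)
  rw [bigH, psi']; positivity

theorem bigH_le (hq1 : q < 1) (haε : 0 < a * ε) (haεq : a * ε < q) :
    bigH a ε q N ≤ 1 / (1 - q) / N :=
  div_le_div_of_nonneg_right (psi'_alph_le hq1 haε haεq) N.cast_nonneg

theorem meshx_of_alph_le {k : ℕ} (hk : alph a ε q ≤ k / N) :
    meshx a ε q N k =
      psi a ε q (alph a ε q) + psi' a ε q (alph a ε q) * (k / N - alph a ε q) :=
  lam_of_alph_le hk

theorem meshx_succ_of_alph_le (hN : 0 < N) {k : ℕ} (hk : alph a ε q ≤ k / N) :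
    meshx a ε q N (k + 1) = meshx a ε q N k + bigH a ε q N := by
  have hk' : alph a ε q ≤ (k + 1 : ℕ) / N := hk.trans (by gcongr; omega)
  rw [meshx_of_alph_le hk, meshx_of_alph_le hk', bigH]
  push_cast
  field_simp
  ring

theorem psi_alph_le_meshx (hq0 : 0 < q) (haε : 0 < a * ε) {k : ℕ} (hk : alph a ε q ≤ k / N) :
    psi a ε q (alph a ε q) ≤ meshx a ε q N k := by
  have hψ' : 0 ≤ psi' a ε q (alph a ε q) := by rw [psi']; positivity
  rw [meshx_of_alph_le hk]
  nlinarith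

theorem meshx_le_one (hq1 : q < 1) (haε : 0 < a * ε) (haεq : a * ε < q) (hN : 0 < N) {k : ℕ}
    (hk : alph a ε q ≤ k / N) (hkN : k ≤ N) : meshx a ε q N k ≤ 1 := by
  have hq0 : 0 < q := haε.trans haεq
  have hψ' : 0 ≤ psi' a ε q (alph a ε q) := by rw [psi']; positivity
  have hk1 : (k : ℝ) / N ≤ 1 := div_le_one_of_le₀ (by exact_mod_cast hkN) (by positivity)
  rw [meshx_of_alph_le hk, ← psi_alph_add_psi'_alph_mul hq1 haε haεq]
  gcongr

theorem sub_alph_sq_le (hq0 : 0 < q) (hq1 : q < 1) (haε : 0 < a * ε) (h16 : a * ε ≤ q / 16) :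
    (q - alph a ε q) ^ 2 ≤ 4 * (a * ε * q) := by
  rw [sub_alph_eq haε, div_pow, div_le_iff₀ (by positivity)]
  set s := √(a * ε * q * (1 - q + a * ε))
  have hδq := mul_pos haε hq0
  have hs : s ^ 2 ≤ a * ε * q := by
    rw [Real.sq_sqrt (mul_nonneg hδq.le (by linarith))]
    exact mul_le_of_le_one_right hδq.le (by linarith)
  have hδq2 : (a * ε * q) ^ 2 ≤ a * ε * q := by
    rw [sq]; exact mul_le_of_le_one_left hδq.le (by nlinarith)
  nlinarith [sq_nonneg (a * ε * q - s), sq_nonneg (a * ε), mul_pos hδq haε]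

theorem half_le_alph (hq0 : 0 < q) (hq1 : q < 1) (haε : 0 < a * ε) (h16 : a * ε ≤ q / 16) :
    q / 2 ≤ alph a ε q := by
  have h := sub_alph_sq_le hq0 hq1 haε h16
  have hqα := sub_pos.2 (alph_lt hq0 haε)
  nlinarith

theorem sq_psi_alph_ge (hq0 : 0 < q) (hq1 : q < 1) (haε : 0 < a * ε) (h16 : a * ε ≤ q / 16) :
    a * ε * q / 16 ≤ psi a ε q (alph a ε q) ^ 2 := by
  have hsq := sub_alph_sq_le hq0 hq1 haε h16
  have hα := half_le_alph hq0 hq1 haε h16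
  have hqα := sub_pos.2 (alph_lt hq0 haε)
  rw [psi, div_pow, le_div_iff₀ (by positivity)]
  calc a * ε * q / 16 * (q - alph a ε q) ^ 2 ≤ a * ε * q / 16 * (4 * (a * ε * q)) := by gcongr
    _ = (a * ε * (q / 2)) ^ 2 := by ring
    _ ≤ (a * ε * alph a ε q) ^ 2 := by gcongr

end VBMesh

theorem exp_neg_div_div_sq_le {β ε p κ : ℝ} (hβ : 0 < β) (hε : 0 < ε) (hκ : 0 < κ) (hp : 0 ≤ p)
    (hκp : κ * ε ≤ p ^ 2) : Real.exp (-β * p / ε) / ε ^ 2 ≤ 24 / (β ^ 4 * κ ^ 2) := by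
  set z := β * p / ε
  have hz : z ^ 4 * Real.exp (-z) ≤ 24 := by
    have h : z ^ 4 / 24 ≤ Real.exp z := by
      simpa [Nat.factorial] using Real.pow_div_factorial_le_exp z (by positivity) 4
    rw [Real.exp_neg, ← div_eq_mul_inv, div_le_iff₀ (Real.exp_pos z)]
    linarith
  have hβκ : β ^ 4 * κ ^ 2 ≤ z ^ 4 * ε ^ 2 := calc
    β ^ 4 * κ ^ 2 = β ^ 4 * (κ * ε) ^ 2 / ε ^ 2 := by field_simp
    _ ≤ β ^ 4 * (p ^ 2) ^ 2 / ε ^ 2 := by gcongr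
    _ = z ^ 4 * ε ^ 2 := by simp only [z]; field_simp
  rw [neg_mul, neg_div, div_le_div_iff₀ (by positivity) (by positivity)]
  calc Real.exp (-z) * (β ^ 4 * κ ^ 2) ≤ Real.exp (-z) * (z ^ 4 * ε ^ 2) := by gcongr
    _ = z ^ 4 * Real.exp (-z) * ε ^ 2 := by ring
    _ ≤ 24 * ε ^ 2 := by gcongr

section Consistency

variable {b c : ℝ → ℝ} {ε : ℝ} {x : ℕ → ℝ} {u : ℝ → ℝ} {i : ℕ} {h : ℝ}

theorem tau_eq_of_uniform (hh : h ≠ 0) (hprev : x (i - 1) = x i - h)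
    (hnext : x (i + 1) = x i + h) :
    tau b c ε x u i =
      -ε * ((u (x i + h) - 2 * u (x i) + u (x i - h)) / h ^ 2 - iteratedDeriv 2 u (x i)) -
        b (x i) * ((u (x i + h) - u (x i)) / h - deriv u (x i)) := by
  simp only [tau, Nat.add_sub_cancel, hprev, hnext, add_sub_cancel_left, sub_sub_cancel]
  field_simp
  ring

theorem abs_tau_le_of_uniform {B M₂ M₃ : ℝ} (hε : 0 ≤ ε) (hu : ContDiff ℝ 3 u) (hh : 0 < h)
    (hprev : x (i - 1) = x i - h) (hnext : x (i + 1) = x i + h) (hb : |b (x i)| ≤ B)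
    (hM₂ : ∀ t ∈ Icc (x i - h) (x i + h), |iteratedDeriv 2 u t| ≤ M₂)
    (hM₃ : ∀ t ∈ Icc (x i - h) (x i + h), |iteratedDeriv 3 u t| ≤ M₃) :
    |tau b c ε x u i| ≤ ε * (M₃ * h / 3) + B * (M₂ * h / 2) := by
  have h₂ := abs_centralSecondDiff_sub_iteratedDeriv_two_le hu hh hM₃
  have h₁ := abs_forwardDiff_sub_deriv_le (hu.of_le (by norm_num)) hh
    fun t ht => hM₂ t ⟨by linarith [ht.1], ht.2⟩
  rw [tau_eq_of_uniform hh.ne' hprev hnext]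
  calc _ ≤ |-ε * ((u (x i + h) - 2 * u (x i) + u (x i - h)) / h ^ 2 - iteratedDeriv 2 u (x i))| +
        |b (x i) * ((u (x i + h) - u (x i)) / h - deriv u (x i))| := abs_sub _ _
    _ ≤ ε * (M₃ * h / 3) + B * (M₂ * h / 2) := by
      rw [abs_mul, abs_mul, abs_neg, abs_of_nonneg hε]
      gcongr
      exact (abs_nonneg _).trans hb

theorem abs_tau_le_of_layer {β C₀ B p : ℝ} (hε : 0 < ε) (hβ : 0 ≤ β) (hC₀ : 0 ≤ C₀)
    (hu : ContDiff ℝ 3 u)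
    (hlayer : ∀ k : ℕ, k ≤ 3 → ∀ t ∈ Icc (0 : ℝ) 1,
      |iteratedDeriv k u t| ≤ C₀ / ε ^ k * Real.exp (-β * t / ε))
    (hh : 0 < h) (hprev : x (i - 1) = x i - h) (hnext : x (i + 1) = x i + h)
    (hp0 : 0 ≤ p) (hp : p ≤ x i - h) (h1 : x i + h ≤ 1) (hb : |b (x i)| ≤ B) :
    |tau b c ε x u i| ≤ (1 / 3 + B / 2) * C₀ * h * (Real.exp (-β * p / ε) / ε ^ 2) := by
  have hexp : ∀ t ∈ Icc (x i - h) (x i + h), Real.exp (-β * t / ε) ≤ Real.exp (-β * p / ε) :=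
    fun t ht => Real.exp_le_exp.2 <| by
      rw [neg_mul, neg_mul, neg_div, neg_div, neg_le_neg_iff]
      gcongr
      linarith [ht.1]
  have hM : ∀ k ≤ 3, ∀ t ∈ Icc (x i - h) (x i + h),
      |iteratedDeriv k u t| ≤ C₀ / ε ^ k * Real.exp (-β * p / ε) := fun k hk t ht =>
    (hlayer k hk t ⟨by linarith [ht.1], ht.2.trans h1⟩).trans
      (mul_le_mul_of_nonneg_left (hexp t ht) (by positivity))
  refine (abs_tau_le_of_uniform hε.le hu hh hprev hnext hb (hM 2 (by norm_num))
    (hM 3 le_rfl)).trans_eq ?_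
  field_simp

end Consistency

theorem stmt_16_general (q a β C₀ : ℝ) (hq0 : 0 < q) (hq1 : q < 1) (ha : 0 < a) (hβ : 0 < β)
    (hC₀ : 0 < C₀) (b c : ℝ → ℝ)
    (hb : ContinuousOn b (Set.Icc 0 1)) :
    ∃ ε₀ C : ℝ, 0 < ε₀ ∧ 0 < C ∧
      ∀ (ε : ℝ) (N J : ℕ) (y : ℝ → ℝ), 0 < ε → ε ≤ ε₀ → a * ε < q → 2 ≤ N →
        1 ≤ J → J < N →
        ((J : ℝ) - 1) / (N : ℝ) < alph a ε q → alph a ε q ≤ (J : ℝ) / (N : ℝ) →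
        ContDiff ℝ 3 y →
        (∀ k : ℕ, k ≤ 3 → ∀ t ∈ Set.Icc (0 : ℝ) 1,
          |iteratedDeriv k y t| ≤ C₀ / ε ^ k * Real.exp (-β * t / ε)) →
        ∀ i : ℕ, J + 1 ≤ i → i + 1 ≤ N →
          |tau b c ε (meshx a ε q N) y i| ≤ C / (N : ℝ) := by
  obtain ⟨B, hB⟩ := isCompact_Icc.exists_bound_of_continuousOn hb
  have hB0 : 0 ≤ B := (norm_nonneg _).trans (hB 0 ⟨le_rfl, zero_le_one⟩)
  have hκ : 0 < a * q / 16 := by positivity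
  refine ⟨q / (16 * a), (1 / 3 + B / 2) * C₀ * (24 / (β ^ 4 * (a * q / 16) ^ 2)) / (1 - q),
    by positivity, div_pos (by positivity) (by linarith), ?_⟩
  intro ε N J y hε hεε₀ haεq hN2 _ _ _ hαJ hy hyk i hiJ hiN
  obtain ⟨k, rfl⟩ : ∃ k, i = k + 1 := ⟨i - 1, by omega⟩
  have haε : 0 < a * ε := mul_pos ha hε
  have h16 : a * ε ≤ q / 16 := by
    rw [le_div_iff₀ (by positivity)] at hεε₀; linarith
  have hN : 0 < N := by omega
  have hαk : alph a ε q ≤ k / N := hαJ.trans (by gcongr; omega)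
  have hαk1 : alph a ε q ≤ (k + 1 : ℕ) / N := hαk.trans (by gcongr; omega)
  have hprev := meshx_succ_of_alph_le hN hαk
  have hnext := meshx_succ_of_alph_le hN hαk1
  have hψ0 := psi_alph_nonneg hq1 haε haεq
  have hp : psi a ε q (alph a ε q) ≤ meshx a ε q N (k + 1) - bigH a ε q N := by
    rw [hprev, add_sub_cancel_right]; exact psi_alph_le_meshx hq0 haε hαk
  have h1 : meshx a ε q N (k + 1) + bigH a ε q N ≤ 1 :=
    hnext ▸ meshx_le_one hq1 haε haεq hN (hαk1.trans (by gcongr; omega)) (by omega)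
  have hH := bigH_pos hq0 haε hN
  have hτ := abs_tau_le_of_layer (c := c) hε hβ.le hC₀.le hy hyk hH
    (by rw [Nat.add_sub_cancel, hprev, add_sub_cancel_right]) hnext hψ0 hp h1
    ((Real.norm_eq_abs _).symm.trans_le (hB _ ⟨by linarith, by linarith⟩))
  have hE := exp_neg_div_div_sq_le hβ hε hκ hψ0 (by linarith [sq_psi_alph_ge hq0 hq1 haε h16])
  calc _ ≤ _ := hτ
    _ ≤ (1 / 3 + B / 2) * C₀ * (1 / (1 - q) / N) * (24 / (β ^ 4 * (a * q / 16) ^ 2)) := by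
      gcongr; exact bigH_le hq1 haε haεq
    _ = _ := by ring

/-- Case 1 of Lemma 3: for the layer component `y` with
`|y⁽ᵏ⁾(x)| ≤ C₀ ε⁻ᵏ e^{−βx/ε}`, on the coarse part of the VB-mesh
(`J+1 ≤ i ≤ N−1`) the consistency error satisfies `|τ_i[y]| ≤ C N⁻¹`
for all sufficiently small `ε`. -/
theorem stmt_16 (q a β C₀ : ℝ) (hq0 : 0 < q) (hq1 : q < 1) (ha : 0 < a) (hβ : 0 < β)
    (hC₀ : 0 < C₀) (b c : ℝ → ℝ)
    (hb : ContinuousOn b (Set.Icc 0 1)) (hc : ContinuousOn c (Set.Icc 0 1))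
    (hbl : ∀ t ∈ Set.Icc (0 : ℝ) 1, β ≤ b t)
    (hcl : ∀ t ∈ Set.Icc (0 : ℝ) 1, 0 ≤ c t) :
    ∃ ε₀ C : ℝ, 0 < ε₀ ∧ 0 < C ∧
      ∀ (ε : ℝ) (N J : ℕ) (y : ℝ → ℝ), 0 < ε → ε ≤ ε₀ → a * ε < q → 2 ≤ N →
        1 ≤ J → J < N →
        ((J : ℝ) - 1) / (N : ℝ) < alph a ε q → alph a ε q ≤ (J : ℝ) / (N : ℝ) →
        ContDiff ℝ 3 y →
        (∀ k : ℕ, k ≤ 3 → ∀ t ∈ Set.Icc (0 : ℝ) 1,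
          |iteratedDeriv k y t| ≤ C₀ / ε ^ k * Real.exp (-β * t / ε)) →
        ∀ i : ℕ, J + 1 ≤ i → i + 1 ≤ N →
          |tau b c ε (meshx a ε q N) y i| ≤ C / (N : ℝ) :=
  stmt_16_general q a β C₀ hq0 hq1 ha hβ hC₀ b c hb
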